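/- Let Ω ⊆ ℝ be bounded measurable of measure 1, spectral with spectrum Λ = {λ_0 = 0, λ_1, ..., λ_{p-1}} + pℤ. For x ∈ Ω define Ω_x = {j ∈ ℤ : x + j/p ∈ Ω} (so 0 ∈ Ω_x). Suppose there exists a set 𝒯 ⊆ ℤ such that for a.e. x ∈ Ω, Ω_x tiles ℤ by 𝒯 (i.e. Ω_x ⊕ 𝒯 = ℤ, each integer having a unique representation j + t). Then Ω tiles ℝ by (1/p)𝒯: the translates {Ω + t/p : t ∈ 𝒯} partition ℝ up to measure zero. -/

import Mathlib

open MeasureTheory Complex Set Bornology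

/-- The exponential function `e_λ(x) = e^{2πiλx}`. -/
noncomputable def expf (l : ℝ) : ℝ → ℂ := fun x =>
  Complex.exp (2 * Real.pi * Complex.I * (l : ℂ) * (x : ℂ))

/-- `Λ` is a spectrum for `Ω`: the exponentials `e_λ`, `λ ∈ Λ`, form an
orthogonal basis of `L²(Ω)` (mutually orthogonal and complete). -/
def IsSpectrum (Ω Λ : Set ℝ) : Prop :=
  (∀ l ∈ Λ, ∀ m ∈ Λ, l ≠ m →
    (∫ x in Ω, expf l x * (starRingEnd ℂ) (expf m x)) = 0) ∧
  (∀ f : ℝ → ℂ, MemLp f 2 (volume.restrict Ω) →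
    (∀ l ∈ Λ, (∫ x in Ω, f x * (starRingEnd ℂ) (expf l x)) = 0) →
    f =ᵐ[volume.restrict Ω] 0)

/-- `Ω` tiles `ℝ` by the translation set `T`: the translates `Ω + t`, `t ∈ T`,
partition `ℝ` up to Lebesgue measure zero. -/
def TilesReal (Ω T : Set ℝ) : Prop :=
  (∀ t ∈ T, ∀ s ∈ T, t ≠ s →
    volume ({x : ℝ | x - t ∈ Ω} ∩ {x : ℝ | x - s ∈ Ω}) = 0) ∧
  volume ({x : ℝ | ∀ t ∈ T, x - t ∉ Ω}) = 0

/-- `A` tiles `ℤ` by `T`: every integer `k` has a unique representation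
`k = a + t` with `a ∈ A`, `t ∈ T`. -/
def TilesZ (A T : Set ℤ) : Prop :=
  ∀ k : ℤ, ∃! q : ℤ × ℤ, q.1 ∈ A ∧ q.2 ∈ T ∧ q.1 + q.2 = k

/-- `(1/p)A` is a spectrum for the `p`-element set `Γ ⊆ ℝ`:
the matrix `((1/√p) e^{2πiλa/p})_{λ∈Γ, a∈A}` is unitary, equivalently
`A` has `p` elements and the rows are mutually orthogonal. -/
def PairSpec (p : ℕ) (Γ : Finset ℝ) (A : Finset ℤ) : Prop :=
  A.card = p ∧ Γ.card = p ∧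
  ∀ l ∈ Γ, ∀ m ∈ Γ, l ≠ m →
    (∑ a ∈ A, Complex.exp (2 * Real.pi * Complex.I * ((l : ℂ) - m) * (a : ℂ) / p)) = 0

/-! Orthogonality of `e_0` and `e_{np}` says that `∫_Ω e^{2πinpx} dx = 0` for `n ≠ 0`: the
`(1/p)`-periodization `∑_k 1_Ω(x + k/p)` of `Ω` has no nonzero Fourier coefficient, so it is
a.e. equal to its mean `p |Ω| = p`, and almost every `x` lies in some `Ω - k/p`.
The rest is combinatorics of the fibers. If `x - t/p` and `x - s/p` both lie in `Ω`, the fiber at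
`ω = x - t/p` contains `0` and `t - s`, and `0 + t = (t - s) + s` forces `t = s` when that fiber
tiles. If `ω = x + k/p ∈ Ω` and its fiber tiles, writing `-k = j + t` gives
`x - t/p = ω + j/p ∈ Ω`. The points whose fiber does not tile form a null set, and so do its
countably many translates by `(1/p)ℤ`. -/

namespace TilesZ

variable {A B : Set ℤ}

theorem exists_add_eq (h : TilesZ A B) (k : ℤ) : ∃ a ∈ A, ∃ b ∈ B, a + b = k := by
  obtain ⟨⟨a, b⟩, ⟨ha, hb, hab⟩, -⟩ := h k
  exact ⟨a, ha, b, hb, hab⟩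

theorem eq_of_add_eq (h : TilesZ A B) {a a' b b' : ℤ} (ha : a ∈ A) (ha' : a' ∈ A) (hb : b ∈ B)
    (hb' : b' ∈ B) (heq : a + b = a' + b') : a = a' ∧ b = b' := by
  obtain ⟨_, -, huniq⟩ := h (a + b)
  simpa using (huniq (a, b) ⟨ha, hb, rfl⟩).trans (huniq (a', b') ⟨ha', hb', heq.symm⟩).symm

theorem exists_sub_div_mem {Ω : Set ℝ} {q x : ℝ} {k : ℤ}
    (h : TilesZ {j : ℤ | x + k / q + j / q ∈ Ω} B) : ∃ t ∈ B, x - t / q ∈ Ω := by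
  obtain ⟨j, hj, t, ht, hjt⟩ := h.exists_add_eq (-k)
  have hj' : (j : ℝ) = -k - t := by exact_mod_cast (by omega : j = -k - t)
  have hj : x + k / q + j / q ∈ Ω := hj
  refine ⟨t, ht, ?_⟩
  convert hj using 2
  rw [hj']
  ring

end TilesZ

theorem not_tilesZ_of_sub_div_mem {Ω : Set ℝ} {q x : ℝ} {B : Set ℤ} {t s : ℤ} (ht : t ∈ B)
    (hs : s ∈ B) (hts : t ≠ s) (hxt : x - t / q ∈ Ω) (hxs : x - s / q ∈ Ω) :
    ¬ TilesZ {j : ℤ | x - t / q + j / q ∈ Ω} B := fun h =>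
  hts (h.eq_of_add_eq (a := 0) (a' := t - s) (by simpa using hxt)
    (show x - t / q + ((t - s : ℤ) : ℝ) / q ∈ Ω by convert hxs using 2; push_cast; ring)
    ht hs (by ring)).2

theorem tilesReal_of_ae_tilesZ {Ω : Set ℝ} {q : ℝ} {B : Set ℤ}
    (htile : ∀ᵐ x ∂volume.restrict Ω, TilesZ {j : ℤ | x + j / q ∈ Ω} B)
    (hcover : ∀ᵐ x, ∃ k : ℤ, x + k / q ∈ Ω) :
    TilesReal Ω {x | ∃ t ∈ B, x = t / q} := by
  set D := {y | ¬ TilesZ {j : ℤ | y + j / q ∈ Ω} B} ∩ Ω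
  have hD (c : ℝ) : volume {x | x + c ∈ D} = 0 := by
    rw [← preimage_ofPred_eq, measure_preimage_add_right]
    exact nonpos_iff_eq_zero.1 ((Measure.le_restrict_apply _ _).trans_eq (ae_iff.1 htile))
  constructor
  · rintro _ ⟨t, ht, rfl⟩ _ ⟨s, hs, rfl⟩ hne
    refine measure_mono_null (fun x ⟨hxt, hxs⟩ => ?_) (hD (-(t / q)))
    rw [mem_ofPred_eq, ← sub_eq_add_neg]
    exact ⟨not_tilesZ_of_sub_div_mem ht hs (fun h => hne (h ▸ rfl)) hxt hxs, hxt⟩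
  · refine measure_mono_null (fun x hx => ?_)
      (measure_union_null (ae_iff.1 hcover) (measure_iUnion_null fun k : ℤ => hD (k / q)))
    by_contra hmem
    obtain ⟨hcov, hnD⟩ := not_or.1 hmem
    obtain ⟨k, hk⟩ := not_not.1 hcov
    obtain ⟨t, ht, hxt⟩ :=
      TilesZ.exists_sub_div_mem (not_not.1 fun h => hnD (mem_iUnion.2 ⟨k, h, hk⟩))
    exact hx _ ⟨t, ht, rfl⟩ hxt

theorem mem_Ioc_ceil_sub_one_mul {T : ℝ} (hT : 0 < T) (x : ℝ) :
    x ∈ Ioc (((⌈x / T⌉ - 1 : ℤ) : ℝ) * T) ((⌈x / T⌉ - 1 : ℤ) * T + T) := by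
  have h1 := Int.ceil_lt_add_one (x / T)
  have h2 := Int.le_ceil (x / T)
  have hx : x / T * T = x := div_mul_cancel₀ x hT.ne'
  push_cast
  constructor <;> nlinarith

theorem Bornology.IsBounded.exists_finset_subset_iUnion_Ioc {T : ℝ} (hT : 0 < T) {Ω : Set ℝ}
    (hbd : IsBounded Ω) : ∃ S : Finset ℤ, Ω ⊆ ⋃ k ∈ S, Ioc (k * T) (k * T + T) := by
  refine ⟨Finset.Icc (⌈sInf Ω / T⌉ - 1) (⌈sSup Ω / T⌉ - 1), fun x hx => ?_⟩
  obtain ⟨hax, hxb⟩ := hbd.subset_Icc_sInf_sSup hx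
  refine mem_biUnion (Finset.mem_coe.2 (Finset.mem_Icc.2 ⟨?_, ?_⟩)) (mem_Ioc_ceil_sub_one_mul hT x)
  all_goals gcongr

noncomputable def finitePeriodization (T : ℝ) (S : Finset ℤ) (Ω : Set ℝ) (x : ℝ) : ℂ :=
  ∑ k ∈ S, Ω.indicator 1 (x + k * T)

theorem norm_finitePeriodization_le (T : ℝ) (S : Finset ℤ) (Ω : Set ℝ) (x : ℝ) :
    ‖finitePeriodization T S Ω x‖ ≤ S.card :=
  calc ‖finitePeriodization T S Ω x‖
      ≤ ∑ k ∈ S, ‖Ω.indicator (1 : ℝ → ℂ) (x + k * T)‖ := norm_sum_le _ _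
    _ ≤ S.card • (1 : ℝ) := Finset.sum_le_card_nsmul _ _ _ fun k _ => by
        simpa using norm_indicator_le_norm_self (1 : ℝ → ℂ) (x + k * T) (s := Ω)
    _ = S.card := nsmul_one _

theorem intervalIntegral_mul_finitePeriodization {T : ℝ} (hT : 0 < T) {Ω : Set ℝ}
    (hΩ : MeasurableSet Ω) {S : Finset ℤ} (hS : Ω ⊆ ⋃ k ∈ S, Ioc (k * T) (k * T + T))
    {φ : ℝ → ℂ} (hφ : Function.Periodic φ T) (hφi : IntegrableOn φ Ω) :
    ∫ x in (0)..T, φ x * finitePeriodization T S Ω x = ∫ x in Ω, φ x := by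
  have hF : Integrable (Ω.indicator φ) := (integrable_indicator_iff hΩ).2 hφi
  have hterm (k : ℤ) (x : ℝ) : φ x * Ω.indicator 1 (x + k * T) = Ω.indicator φ (x + k * T) := by
    by_cases hx : x + k * T ∈ Ω <;> simp [hx, hφ.int_mul k x]
  calc ∫ x in (0)..T, φ x * finitePeriodization T S Ω x
      = ∑ k ∈ S, ∫ x in (0)..T, Ω.indicator φ (x + k * T) := by
        simp_rw [finitePeriodization, Finset.mul_sum, hterm]
        exact intervalIntegral.integral_finsetSum fun k _ =>
          (hF.comp_add_right _).intervalIntegrable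
    _ = ∑ k ∈ S, ∫ x in Ioc (k * T) (k * T + T), Ω.indicator φ x := by
        refine Finset.sum_congr rfl fun k _ => ?_
        rw [intervalIntegral.integral_comp_add_right, intervalIntegral.integral_of_le (by linarith),
          zero_add, add_comm T]
    _ = ∫ x in ⋃ k ∈ S, Ioc (k * T) (k * T + T), Ω.indicator φ x := by
        refine (integral_biUnion_finset S (fun _ _ => measurableSet_Ioc) (fun k _ l _ hkl => ?_)
          fun _ _ => hF.integrableOn).symm
        simpa [zsmul_eq_mul, add_mul] using pairwise_disjoint_Ioc_add_zsmul (0 : ℝ) T hkl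
    _ = ∫ x in Ω, φ x := by rw [setIntegral_indicator hΩ, inter_eq_right.2 hS]

section AddCircle

variable {T : ℝ} [hT : Fact (0 < T)]

theorem AddCircle.ae_coe_of_ae {P : AddCircle T → Prop} (h : ∀ᵐ z, P z) :
    ∀ᵐ x : ℝ, P x := by
  have hac : Measure.map ((↑) : ℝ → AddCircle T) volume ≪ volume := by
    rw [← (AddCircle.measurePreserving_mk T 0).map_eq]
    exact (isAddFundamentalDomain_Ioc' hT.out 0).absolutelyContinuous_map
  exact ae_of_ae_map AddCircle.measurable_mk'.aemeasurable (hac.ae_le h)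

theorem ae_eq_fourierCoeff_zero {f : AddCircle T → ℂ} (hf : MemLp f 2 AddCircle.haarAddCircle)
    (h : ∀ n ≠ 0, fourierCoeff f n = 0) :
    ∀ᵐ z ∂AddCircle.haarAddCircle, f z = fourierCoeff f 0 := by
  have hcoeff : fourierCoeff (hf.toLp f) = fourierCoeff f := fourierCoeff_congr_ae hf.coeFn_toLp
  have hsum : hf.toLp f = fourierCoeff f 0 • fourierLp 2 0 := by
    refine (hasSum_fourier_series_L2 (hf.toLp f)).unique (hasSum_single 0 fun n hn => ?_) |>.trans ?_
    · simp [hcoeff, h n hn]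
    · rw [hcoeff]
  filter_upwards [hf.coeFn_toLp, Lp.coeFn_smul (fourierCoeff f 0) (fourierLp (T := T) 2 0),
    coeFn_fourierLp (T := T) 2 0] with z h1 h2 h3
  rw [← h1, hsum, h2, Pi.smul_apply, h3, fourier_zero, smul_eq_mul, mul_one]

theorem memLp_liftIoc_finitePeriodization (S : Finset ℤ) {Ω : Set ℝ} (hΩ : MeasurableSet Ω) :
    MemLp (AddCircle.liftIoc T 0 (finitePeriodization T S Ω)) 2 AddCircle.haarAddCircle := by
  rw [memLp_haarAddCircle_iff]
  refine MemLp.memLp_liftIoc (MemLp.of_bound ?_ S.card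
    (ae_of_all _ (norm_finitePeriodization_le T S Ω)))
  exact (Finset.measurable_sum _ fun k _ =>
    (measurable_const.indicator hΩ).comp (measurable_add_const _)).aestronglyMeasurable

theorem fourierCoeff_liftIoc_finitePeriodization {Ω : Set ℝ} (hbd : IsBounded Ω)
    (hΩ : MeasurableSet Ω) {S : Finset ℤ} (hS : Ω ⊆ ⋃ k ∈ S, Ioc (k * T) (k * T + T)) (n : ℤ) :
    fourierCoeff (AddCircle.liftIoc T 0 (finitePeriodization T S Ω)) n =
      T⁻¹ • ∫ x in Ω, fourier (-n) (x : AddCircle T) := by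
  have hφ : IntegrableOn (fun x : ℝ => fourier (-n) (x : AddCircle T)) Ω :=
    ((map_continuous (fourier (-n))).comp (AddCircle.continuous_mk' T)).continuousOn
      |>.integrableOn_compact hbd.isCompact_closure |>.mono_set subset_closure
  rw [fourierCoeff_eq_intervalIntegral _ n 0, zero_add, one_div,
    ← intervalIntegral_mul_finitePeriodization hT.out hΩ hS (fun x => by simp) hφ]
  congr 1
  refine intervalIntegral.integral_congr_ae (ae_of_all _ fun x hx => ?_)
  rw [uIoc_of_le hT.out.le] at hx
  rw [smul_eq_mul, AddCircle.liftIoc_coe_apply (by rwa [zero_add])]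

theorem ae_exists_add_int_mul_mem_of_integral_fourier_eq_zero {Ω : Set ℝ} (hbd : IsBounded Ω)
    (hΩ : MeasurableSet Ω) (h0 : volume Ω ≠ 0)
    (hfourier : ∀ n : ℤ, n ≠ 0 → ∫ x in Ω, fourier n (x : AddCircle T) = 0) :
    ∀ᵐ x : ℝ, ∃ k : ℤ, x + k * T ∈ Ω := by
  obtain ⟨S, hS⟩ := hbd.exists_finset_subset_iUnion_Ioc hT.out
  have hcoeff := fourierCoeff_liftIoc_finitePeriodization hbd hΩ hS
  have hmem := memLp_liftIoc_finitePeriodization S hΩ (T := T)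
  set G := AddCircle.liftIoc T 0 (finitePeriodization T S Ω)
  have hG0 : fourierCoeff G 0 ≠ 0 := by
    simp [hcoeff, hT.out.ne', Measure.real, ENNReal.toReal_eq_zero_iff, h0, hbd.measure_lt_top.ne]
  have hGne : ∀ᵐ z : AddCircle T, G z ≠ 0 := by
    rw [AddCircle.volume_eq_smul_haarAddCircle]
    refine Measure.ae_smul_measure ?_ _
    filter_upwards [ae_eq_fourierCoeff_zero hmem fun n hn => by
      rw [hcoeff, hfourier _ (neg_ne_zero.2 hn), smul_zero]] with z hz
    rwa [hz]
  filter_upwards [AddCircle.ae_coe_of_ae hGne] with x hx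
  -- `G x` is the truncated periodization at the representative `y ∈ (0, T]` of `x`
  obtain ⟨k, -, hk⟩ := Finset.exists_ne_zero_of_sum_ne_zero hx
  set y : ℝ := (AddCircle.equivIoc T 0 x : ℝ)
  obtain ⟨m, hm⟩ : ∃ m : ℤ, m • T = y - x := by
    rw [← AddCircle.coe_eq_zero_iff, AddCircle.coe_sub, AddCircle.coe_equivIoc, sub_self]
  have hyk : y + k * T ∈ Ω := by_contra fun h => hk (indicator_of_notMem h _)
  refine ⟨m + k, ?_⟩
  convert hyk using 1
  rw [zsmul_eq_mul] at hm
  push_cast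
  linarith

end AddCircle

theorem expf_zero (x : ℝ) : expf 0 x = 1 := by simp [expf]

theorem conj_expf (l x : ℝ) : starRingEnd ℂ (expf l x) = expf (-l) x := by
  rw [expf, expf, ← Complex.exp_conj]
  congr 1
  simp only [map_mul, map_ofNat, conj_ofReal, conj_I]
  push_cast
  ring

theorem fourier_coe_eq_expf (T : ℝ) (n : ℤ) (x : ℝ) :
    fourier n (x : AddCircle T) = expf (n / T) x := by
  rw [fourier_coe_apply, expf]
  congr 1
  push_cast
  ring

theorem IsSpectrum.integral_expf_neg_eq_zero {Ω Λ : Set ℝ} (h : IsSpectrum Ω Λ) (h0 : 0 ∈ Λ)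
    {l : ℝ} (hl : l ∈ Λ) (hl0 : l ≠ 0) : ∫ x in Ω, expf (-l) x = 0 := by
  simpa [expf_zero, conj_expf] using h.1 0 h0 l hl hl0.symm

theorem common_fiber_tiling_implies_real_tiling_general
    (Ω : Set ℝ) (hbd : IsBounded Ω) (hmeas : MeasurableSet Ω)
    (hvol : volume Ω = 1)
    (p : ℕ) (hp : 0 < p)
    (lam : Fin p → ℝ) (hlam0 : lam ⟨0, hp⟩ = 0)
    (Λ : Set ℝ) (hΛ : Λ = {x : ℝ | ∃ i : Fin p, ∃ k : ℤ, x = lam i + k * p})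
    (hspec : IsSpectrum Ω Λ)
    (T : Set ℤ)
    (htile : ∀ᵐ x : ℝ ∂(volume.restrict Ω),
      TilesZ {j : ℤ | x + (j : ℝ) / p ∈ Ω} T) :
    TilesReal Ω {x : ℝ | ∃ t ∈ T, x = (t : ℝ) / p} := by
  have : Fact (0 < (1 / p : ℝ)) := ⟨by positivity⟩
  have hmem (k : ℤ) : k * (p : ℝ) ∈ Λ := hΛ ▸ ⟨⟨0, hp⟩, k, by rw [hlam0, zero_add]⟩
  have hfourier (n : ℤ) (hn : n ≠ 0) : ∫ x in Ω, fourier n (x : AddCircle (1 / p : ℝ)) = 0 := by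
    simp only [fourier_coe_eq_expf, one_div, div_inv_eq_mul]
    simpa using
      hspec.integral_expf_neg_eq_zero (by simpa using hmem 0) (hmem (-n)) (by simp [hn, hp.ne'])
  refine tilesReal_of_ae_tilesZ htile ?_
  filter_upwards [ae_exists_add_int_mul_mem_of_integral_fourier_eq_zero hbd hmeas (by simp [hvol])
    hfourier] with x ⟨k, hk⟩
  exact ⟨k, by rwa [div_eq_mul_one_div]⟩

/-- If the fibers `Ω_x = {j ∈ ℤ : x + j/p ∈ Ω}` of a spectral set `Ω` of measure 1
with spectrum `{λ_0=0,...,λ_{p-1}} + pℤ` tile `ℤ` by a common tiling set `𝒯 ⊆ ℤ`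
(for a.e. `x ∈ Ω`), then `Ω` tiles `ℝ` by `(1/p)𝒯`. -/
theorem common_fiber_tiling_implies_real_tiling
    (Ω : Set ℝ) (hbd : IsBounded Ω) (hmeas : MeasurableSet Ω)
    (hvol : volume Ω = 1)
    (p : ℕ) (hp : 0 < p)
    (lam : Fin p → ℝ) (hlam0 : lam ⟨0, hp⟩ = 0)
    (hlam_mem : ∀ i, lam i ∈ Ico (0 : ℝ) p) (hlam_inj : Function.Injective lam)
    (Λ : Set ℝ) (hΛ : Λ = {x : ℝ | ∃ i : Fin p, ∃ k : ℤ, x = lam i + k * p})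
    (hspec : IsSpectrum Ω Λ)
    (T : Set ℤ)
    (htile : ∀ᵐ x : ℝ ∂(volume.restrict Ω),
      TilesZ {j : ℤ | x + (j : ℝ) / p ∈ Ω} T) :
    TilesReal Ω {x : ℝ | ∃ t ∈ T, x = (t : ℝ) / p} :=
  common_fiber_tiling_implies_real_tiling_general Ω hbd hmeas hvol p hp lam hlam0 Λ hΛ hspec T htile
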